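/- arXiv:0907.1552 — 3 statements merged into one kernel-verified Lean document; each statement's English description precedes it below -/
import Mathlib

section
/- Let 0 < α < π/3 and l > 0, let T = T(α) be the subequilateral triangle, and set h = l·cos(α/2) (the width of T). Define w : ℝ² → ℝ by w(x, y) = J₀(j_{1,1}·x/h). Then ∫_T w dA = 0, ∫_T w² dA > 0, and ∫_T ‖∇w‖² dA = (j_{1,1}/h)²·∫_T w² dA. (Consequently the first nonzero Neumann eigenvalue satisfies μ₁(α)·D² ≤ j_{1,1}²/cos²(α/2), where D = l is the diameter.) -/
/-
In the coordinates of the triangle, `T(α) = {0 ≤ x ≤ h, |y| ≤ x tan(α/2)}`, so for a function of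
`x` alone `∫_T G(cx) dA = 2 tan(α/2) ∫₀^h G(cx) x dx = (2 tan(α/2)/c²) ∫₀^{ch} t G(t) dt`.
With `c = j₁₁/h` the three integrals become Bessel integrals over `[0, j₁₁]`, since
`|∇w|² = c² J₁(cx)²`, and the classical identities `(t J₁)' = t J₀` and `(t J₁ J₀)' = t (J₀² - J₁²)`
(from `J₀' = -J₁`) show `∫ t J₀ = j₁₁ J₁(j₁₁) = 0` and `∫ t J₁² = ∫ t J₀²`. Positivity of
`∫ t J₀²` comes from `J₀(0) = 1`.
-/

open MeasureTheory Real

noncomputable section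

/-- The Euclidean plane. -/
abbrev E2 := EuclideanSpace ℝ (Fin 2)

/-- The point (a, b) in the Euclidean plane. -/
def pt (a b : ℝ) : E2 := WithLp.toLp 2 ![a, b]

/-- The Bessel function `J_n(x) = (1/π)·∫₀^π cos(nθ − x·sin θ) dθ`. -/
def besselJ (n : ℕ) (x : ℝ) : ℝ :=
  (1 / π) * ∫ θ in (0:ℝ)..π, Real.cos (n * θ - x * Real.sin θ)

/-- The isosceles triangle `T(α)` with aperture `α` at the origin and
two equal sides of length `l`, symmetric about the x-axis. -/
def Tri (α l : ℝ) : Set E2 :=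
  convexHull ℝ {pt 0 0, pt (l * Real.cos (α/2)) (l * Real.sin (α/2)),
    pt (l * Real.cos (α/2)) (-(l * Real.sin (α/2)))}

lemma hasDerivAt_besselJ (n : ℕ) (x : ℝ) :
    HasDerivAt (besselJ n)
      ((1 / π) * ∫ θ in (0:ℝ)..π, sin θ * sin (n * θ - x * sin θ)) x := by
  have key := intervalIntegral.hasDerivAt_integral_of_dominated_loc_of_deriv_le
      (F := fun x θ => cos (n * θ - x * sin θ)) (F' := fun x θ => sin θ * sin (n * θ - x * sin θ))
      (x₀ := x) (bound := fun _ => 1) (a := 0) (b := π) (s := Metric.ball x 1) (μ := volume)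
      (Metric.ball_mem_nhds x one_pos) (.of_forall fun _ => by fun_prop)
      ((by fun_prop : Continuous _).intervalIntegrable 0 π) (by fun_prop) ?_
      intervalIntegrable_const ?_
  · exact key.2.const_mul (1 / π)
  · refine .of_forall fun θ _ y _ => ?_
    rw [norm_mul, Real.norm_eq_abs, Real.norm_eq_abs]
    exact mul_le_one₀ (abs_sin_le_one θ) (abs_nonneg _) (abs_sin_le_one _)
  · refine .of_forall fun θ _ y _ => ?_
    have := ((hasDerivAt_mul_const (sin θ)).const_sub ((n:ℝ) * θ)).cos (x := y)
    exact this.congr_deriv (by ring)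

@[fun_prop]
lemma continuous_besselJ (n : ℕ) : Continuous (besselJ n) :=
  continuous_iff_continuousAt.2 fun x => (hasDerivAt_besselJ n x).continuousAt

lemma besselJ_zero_zero : besselJ 0 0 = 1 := by
  simp [besselJ]

lemma integral_cos_mul_cos_mul_sin (x : ℝ) : ∫ θ in (0:ℝ)..π, cos θ * cos (x * sin θ) = 0 := by
  have h := intervalIntegral.integral_comp_sub_left (fun θ => cos θ * cos (x * sin θ)) π
    (a := 0) (b := π)
  simp only [cos_pi_sub, sin_pi_sub, sub_self, sub_zero, neg_mul, intervalIntegral.integral_neg] at h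
  linarith

lemma hasDerivAt_besselJ_zero (x : ℝ) : HasDerivAt (besselJ 0) (-besselJ 1 x) x := by
  convert hasDerivAt_besselJ 0 x using 1
  have hint : ∀ θ ∈ Set.uIcc (0:ℝ) π, sin θ * sin ((0:ℕ) * θ - x * sin θ)
      = cos θ * cos (x * sin θ) - cos ((1:ℕ) * θ - x * sin θ) := by
    intro θ _
    simp only [Nat.cast_zero, Nat.cast_one, zero_mul, one_mul, zero_sub, sin_neg, cos_sub]
    ring
  rw [besselJ, intervalIntegral.integral_congr hint, intervalIntegral.integral_sub
    ((by fun_prop : Continuous _).intervalIntegrable 0 π)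
    ((by fun_prop : Continuous _).intervalIntegrable 0 π), integral_cos_mul_cos_mul_sin]
  ring

lemma hasDerivAt_mul_besselJ_one (x : ℝ) :
    HasDerivAt (fun t => t * besselJ 1 t) (x * besselJ 0 x) x := by
  refine ((hasDerivAt_id x).mul (hasDerivAt_besselJ 1 x)).congr_deriv ?_
  -- `J₁ + x J₁' - x J₀` is `(1/π) ∫₀^π d/dθ sin (θ - x sin θ) dθ = 0`
  have hexact : ∀ θ ∈ Set.uIcc (0:ℝ) π, HasDerivAt (fun θ => sin (θ - x * sin θ))
      (cos ((1:ℕ) * θ - x * sin θ) + x * (sin θ * sin ((1:ℕ) * θ - x * sin θ))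
        - x * cos ((0:ℕ) * θ - x * sin θ)) θ := by
    intro θ _
    have hphase : HasDerivAt (fun θ => θ - x * sin θ) (1 - x * cos θ) θ :=
      (hasDerivAt_id' θ).sub ((hasDerivAt_sin θ).const_mul x)
    refine hphase.sin.congr_deriv ?_
    simp only [Nat.cast_zero, Nat.cast_one, zero_mul, one_mul, zero_sub, cos_neg, cos_sub, sin_sub]
    linear_combination (-(x * cos (x * sin θ))) * sin_sq_add_cos_sq θ
  have hzero := intervalIntegral.integral_eq_sub_of_hasDerivAt hexact
    ((by fun_prop : Continuous _).intervalIntegrable 0 π)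
  rw [intervalIntegral.integral_sub ((by fun_prop : Continuous _).intervalIntegrable 0 π)
      ((by fun_prop : Continuous _).intervalIntegrable 0 π),
    intervalIntegral.integral_add ((by fun_prop : Continuous _).intervalIntegrable 0 π)
      ((by fun_prop : Continuous _).intervalIntegrable 0 π),
    intervalIntegral.integral_const_mul, intervalIntegral.integral_const_mul] at hzero
  simp only [besselJ, id_eq, one_mul, Nat.cast_one, Nat.cast_zero, zero_mul, zero_sub,
    cos_neg, sin_pi, sin_zero, mul_zero, sub_zero] at hzero ⊢
  field_simp
  linear_combination hzero

lemma integral_mul_besselJ_zero (b : ℝ) : ∫ t in (0:ℝ)..b, t * besselJ 0 t = b * besselJ 1 b := by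
  simpa using intervalIntegral.integral_eq_sub_of_hasDerivAt
    (fun t _ => hasDerivAt_mul_besselJ_one t)
    ((by fun_prop : Continuous fun t => t * besselJ 0 t).intervalIntegrable 0 b)

lemma integral_mul_sq_besselJ_one_of_besselJ_one_eq_zero {b : ℝ} (hb : besselJ 1 b = 0) :
    ∫ t in (0:ℝ)..b, t * besselJ 1 t ^ 2 = ∫ t in (0:ℝ)..b, t * besselJ 0 t ^ 2 := by
  have hderiv : ∀ t ∈ Set.uIcc (0:ℝ) b, HasDerivAt (fun t => t * besselJ 1 t * besselJ 0 t)
      (t * besselJ 0 t ^ 2 - t * besselJ 1 t ^ 2) t := fun t _ =>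
    ((hasDerivAt_mul_besselJ_one t).mul (hasDerivAt_besselJ_zero t)).congr_deriv (by ring)
  have hcont (n : ℕ) : Continuous fun t => t * besselJ n t ^ 2 := by fun_prop
  have hFTC := intervalIntegral.integral_eq_sub_of_hasDerivAt hderiv
    (((hcont 0).sub (hcont 1)).intervalIntegrable 0 b)
  rw [intervalIntegral.integral_sub ((hcont 0).intervalIntegrable 0 b)
    ((hcont 1).intervalIntegrable 0 b)] at hFTC
  simp only [hb, mul_zero, zero_mul, sub_zero] at hFTC
  linarith

lemma integral_mul_sq_besselJ_zero_pos {b : ℝ} (hb : 0 < b) :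
    0 < ∫ t in (0:ℝ)..b, t * besselJ 0 t ^ 2 := by
  have hnear : ∀ᶠ t in nhdsWithin (0:ℝ) (Set.Ioi 0), 0 < t ∧ t < b ∧ 0 < besselJ 0 t := by
    refine eventually_mem_nhdsWithin.and ((eventually_nhdsWithin_of_eventually_nhds ?_))
    refine (eventually_lt_nhds hb).and (continuousAt_const.eventually_lt
      (continuous_besselJ 0).continuousAt (by rw [besselJ_zero_zero]; exact one_pos))
  obtain ⟨c, hc0, hcb, hJc⟩ := hnear.exists
  refine intervalIntegral.integral_pos hb (by fun_prop) (fun t ht => ?_) ⟨c, ⟨hc0.le, hcb.le⟩, ?_⟩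
  · exact mul_nonneg ht.1.le (sq_nonneg _)
  · positivity

def wedge (h m : ℝ) : Set E2 := {z | 0 ≤ z 0 ∧ z 0 ≤ h ∧ |z 1| ≤ m * z 0}

@[simp] lemma pt_apply_zero (a b : ℝ) : pt a b 0 = a := rfl
@[simp] lemma pt_apply_one (a b : ℝ) : pt a b 1 = b := rfl

lemma pt_zero_zero : pt 0 0 = 0 := by
  ext i; fin_cases i <;> rfl

lemma convex_wedge (h m : ℝ) : Convex ℝ (wedge h m) := by
  rintro z ⟨hz0, hzh, hz1⟩ w ⟨hw0, hwh, hw1⟩ a b ha hb hab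
  simp only [wedge, Set.mem_ofPred_eq, PiLp.add_apply, PiLp.smul_apply, smul_eq_mul]
  refine ⟨by positivity, by nlinarith, ?_⟩
  calc |a * z 1 + b * w 1| ≤ a * |z 1| + b * |w 1| := by
        simpa [abs_mul, abs_of_nonneg ha, abs_of_nonneg hb] using abs_add_le (a * z 1) (b * w 1)
    _ ≤ m * (a * z 0 + b * w 0) := by nlinarith

lemma smul_add_smul_mem_convexHull_zero {E : Type*} [AddCommGroup E] [Module ℝ E] (x y : E)
    {b c : ℝ} (hb : 0 ≤ b) (hc : 0 ≤ c) (hbc : b + c ≤ 1) :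
    b • x + c • y ∈ convexHull ℝ {0, x, y} := by
  have hconv := convex_convexHull ℝ ({0, x, y} : Set E)
  have h0 : (0 : E) ∈ convexHull ℝ {0, x, y} := subset_convexHull ℝ _ (by simp)
  rcases (add_nonneg hb hc).eq_or_lt with hs | hs
  · obtain ⟨rfl, rfl⟩ : b = 0 ∧ c = 0 := ⟨by linarith, by linarith⟩
    simpa using h0
  have hq := hconv (subset_convexHull ℝ _ (by simp) : x ∈ _) (subset_convexHull ℝ _ (by simp) : y ∈ _)
    (div_nonneg hb hs.le) (div_nonneg hc hs.le) (by field_simp)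
  convert hconv.smul_mem_of_zero_mem h0 hq ⟨hs.le, hbc⟩ using 1
  rw [smul_add, smul_smul, smul_smul, mul_div_cancel₀ _ hs.ne', mul_div_cancel₀ _ hs.ne']

lemma convexHull_triangle_eq_wedge {h m : ℝ} (hh : 0 < h) (hm : 0 < m) :
    convexHull ℝ {pt 0 0, pt h (m * h), pt h (-(m * h))} = wedge h m := by
  refine subset_antisymm (convexHull_min ?_ (convex_wedge h m)) fun z ⟨hz0, hzh, hz1⟩ => ?_
  · rintro z (rfl | rfl | rfl) <;>
      simp [wedge, hh.le, abs_of_pos hh, abs_of_pos hm, mul_comm]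
  obtain ⟨hlo, hhi⟩ := abs_le.1 hz1
  -- the apex is the origin, so `z` only needs its barycentric weights on the two other vertices
  have hz : z = ((z 0 / h + z 1 / (m * h)) / 2) • pt h (m * h)
      + ((z 0 / h - z 1 / (m * h)) / 2) • pt h (-(m * h)) := by
    ext i; fin_cases i <;> simp <;> field_simp <;> ring
  rw [pt_zero_zero, hz]
  apply smul_add_smul_mem_convexHull_zero
  · rw [← sub_nonneg]; field_simp; nlinarith
  · rw [← sub_nonneg]; field_simp; nlinarith
  · rw [← sub_nonneg]; field_simp; nlinarith

lemma integral_indicator_wedge_slice {h m x : ℝ} (hm : 0 ≤ m) (F : ℝ → ℝ) :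
    ∫ y, {p : ℝ × ℝ | 0 ≤ p.1 ∧ p.1 ≤ h ∧ |p.2| ≤ m * p.1}.indicator (fun p => F p.1) (x, y)
      = (Set.Icc 0 h).indicator (fun x => F x * (2 * m * x)) x := by
  by_cases hx : x ∈ Set.Icc 0 h
  · have hslice : (fun y => {p : ℝ × ℝ | 0 ≤ p.1 ∧ p.1 ≤ h ∧ |p.2| ≤ m * p.1}.indicator
        (fun p => F p.1) (x, y)) = (Set.Icc (-(m * x)) (m * x)).indicator (fun _ => F x) := by
      ext y
      simp only [Set.indicator_apply, Set.mem_ofPred_eq, Set.mem_Icc, abs_le, hx.1, hx.2, true_and]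
    rw [hslice, integral_indicator_const _ measurableSet_Icc, Set.indicator_of_mem hx,
      Real.volume_real_Icc, max_eq_left (by nlinarith [hx.1]), smul_eq_mul]
    ring
  · rw [Set.indicator_of_notMem hx]
    refine integral_eq_zero_of_ae (.of_forall fun y => Set.indicator_of_notMem ?_ _)
    exact fun hp => hx ⟨hp.1, hp.2.1⟩

lemma setIntegral_wedge_prod {h m : ℝ} (hh : 0 ≤ h) (hm : 0 ≤ m) {F : ℝ → ℝ}
    (hF : Continuous F) :
    ∫ p in {p : ℝ × ℝ | 0 ≤ p.1 ∧ p.1 ≤ h ∧ |p.2| ≤ m * p.1}, F p.1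
      = ∫ x in (0:ℝ)..h, F x * (2 * m * x) := by
  set S : Set (ℝ × ℝ) := {p | 0 ≤ p.1 ∧ p.1 ≤ h ∧ |p.2| ≤ m * p.1}
  have hS : IsClosed S :=
    (isClosed_le continuous_const continuous_fst).inter ((isClosed_le continuous_fst
      continuous_const).inter (isClosed_le continuous_snd.abs (continuous_const.mul continuous_fst)))
  have hSbdd : S ⊆ Set.Icc 0 h ×ˢ Set.Icc (-(m * h)) (m * h) := fun p ⟨h0, hh, hp⟩ =>
    ⟨⟨h0, hh⟩, abs_le.1 (hp.trans (by nlinarith))⟩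
  have hint : Integrable (S.indicator fun p => F p.1) (volume.prod volume) :=
    ((hF.comp continuous_fst).continuousOn.integrableOn_compact
      ((isCompact_Icc.prod isCompact_Icc).of_isClosed_subset hS hSbdd)).integrable_indicator
      hS.measurableSet
  rw [← integral_indicator hS.measurableSet, Measure.volume_eq_prod, integral_prod _ hint,
    intervalIntegral.integral_of_le hh, ← integral_Icc_eq_integral_Ioc,
    ← integral_indicator measurableSet_Icc]
  exact integral_congr_ae (.of_forall fun x => integral_indicator_wedge_slice hm F)

lemma setIntegral_wedge {h m : ℝ} (hh : 0 ≤ h) (hm : 0 ≤ m) {F : ℝ → ℝ} (hF : Continuous F) :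
    ∫ z in wedge h m, F (z 0) = ∫ x in (0:ℝ)..h, F x * (2 * m * x) := by
  let φ : E2 ≃ᵐ ℝ × ℝ :=
    (MeasurableEquiv.toLp 2 (Fin 2 → ℝ)).symm.trans MeasurableEquiv.finTwoArrow
  have hφ : MeasurePreserving φ := (volume_preserving_finTwoArrow ℝ).comp
    (EuclideanSpace.volume_preserving_symm_measurableEquiv_toLp (Fin 2))
  rw [← setIntegral_wedge_prod hh hm hF,
    ← hφ.setIntegral_preimage_emb φ.measurableEmbedding (fun p => F p.1)]
  rfl

lemma Tri_eq_wedge {α l : ℝ} (hα0 : 0 < α) (hα : α < π) (hl : 0 < l) :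
    Tri α l = wedge (l * cos (α / 2)) (tan (α / 2)) := by
  have hcos : 0 < cos (α / 2) := cos_pos_of_mem_Ioo ⟨by linarith, by linarith⟩
  have hk : tan (α / 2) * (l * cos (α / 2)) = l * sin (α / 2) := by
    rw [tan_eq_sin_div_cos]
    field_simp
  rw [← convexHull_triangle_eq_wedge (by positivity) (tan_pos_of_pos_of_lt_pi_div_two
    (by linarith) (by linarith)), Tri, hk]

lemma intervalIntegral_comp_mul_mul_id (G : ℝ → ℝ) {c : ℝ} (hc : c ≠ 0) (h m : ℝ) :
    ∫ x in (0:ℝ)..h, G (c * x) * (2 * m * x) = 2 * m / c ^ 2 * ∫ t in (0:ℝ)..c * h, t * G t := by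
  have hpull : ∀ x ∈ Set.uIcc (0:ℝ) h, G (c * x) * (2 * m * x) = 2 * m / c * (c * x * G (c * x)) :=
    fun x _ => by field_simp
  rw [intervalIntegral.integral_congr hpull, intervalIntegral.integral_const_mul,
    intervalIntegral.integral_comp_mul_left (fun t => t * G t) hc, mul_zero, smul_eq_mul]
  field_simp

lemma setIntegral_Tri_comp_mul {α l : ℝ} (hα0 : 0 < α) (hα : α < π) (hl : 0 < l) {c : ℝ}
    (hc : c ≠ 0) {G : ℝ → ℝ} (hG : Continuous G) :
    ∫ z in Tri α l, G (c * z 0)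
      = 2 * tan (α / 2) / c ^ 2 * ∫ t in (0:ℝ)..c * (l * cos (α / 2)), t * G t := by
  rw [Tri_eq_wedge hα0 hα hl, setIntegral_wedge (mul_pos hl (cos_pos_of_mem_Ioo
    ⟨by linarith, by linarith⟩)).le (tan_pos_of_pos_of_lt_pi_div_two (by linarith)
    (by linarith)).le (F := fun x => G (c * x)) (by fun_prop),
    intervalIntegral_comp_mul_mul_id G hc]

open InnerProductSpace in
lemma HasDerivAt.hasGradientAt_comp_apply {ι : Type*} [Fintype ι] [DecidableEq ι] {f : ℝ → ℝ}
    {f' : ℝ} {z : EuclideanSpace ℝ ι} (i : ι) (hf : HasDerivAt f f' (z i)) :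
    HasGradientAt (fun z : EuclideanSpace ℝ ι => f (z i)) (f' • EuclideanSpace.single i 1) z := by
  rw [hasGradientAt_iff_hasFDerivAt]
  refine (hf.comp_hasFDerivAt z (EuclideanSpace.proj (𝕜 := ℝ) i).hasFDerivAt).congr_fderiv ?_
  ext v
  simp [toDual_apply_apply, EuclideanSpace.inner_single_left]

/-- The trial function `w(x,y) = J₀(j_{1,1}·x/h)`, where `h = l·cos(α/2)` is
the width of the subequilateral triangle `T(α)`, has mean value zero and
Rayleigh quotient exactly `(j_{1,1}/h)²` on `T(α)`. -/
theorem subequilateral_trial_function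
    (α l : ℝ) (hα0 : 0 < α) (hα : α < π/3) (hl : 0 < l)
    (h : ℝ) (hh : h = l * Real.cos (α/2))
    (j11 : ℝ) (hj11 : IsLeast {x : ℝ | 0 < x ∧ besselJ 1 x = 0} j11)
    (w : E2 → ℝ) (hw : w = fun z => besselJ 0 (j11 * z 0 / h)) :
    (∫ z in Tri α l, w z = 0) ∧
    (0 < ∫ z in Tri α l, (w z)^2) ∧
    (∫ z in Tri α l, ‖gradient w z‖^2 = (j11 / h)^2 * ∫ z in Tri α l, (w z)^2) := by
  have hαπ : α < π := by linarith [pi_pos]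
  have hh0 : 0 < h := hh ▸ mul_pos hl (cos_pos_of_mem_Ioo ⟨by linarith, by linarith⟩)
  obtain ⟨⟨hj0, hJ1⟩, -⟩ := hj11
  set c := j11 / h
  have hc : 0 < c := by positivity
  have hreduce (G : ℝ → ℝ) (hG : Continuous G) :
      ∫ z in Tri α l, G (c * z 0) = 2 * tan (α / 2) / c ^ 2 * ∫ t in (0:ℝ)..j11, t * G t := by
    rw [setIntegral_Tri_comp_mul hα0 hαπ hl hc.ne' hG, ← hh, div_mul_cancel₀ _ hh0.ne']
  have hw' : w = fun z => besselJ 0 (c * z 0) := by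
    simp only [hw, c, mul_div_right_comm]
  have hgrad (z : E2) : ‖gradient w z‖ ^ 2 = c ^ 2 * besselJ 1 (c * z 0) ^ 2 := by
    have hd : HasDerivAt (fun t => besselJ 0 (c * t)) (-besselJ 1 (c * z 0) * (c * 1)) (z 0) :=
      (hasDerivAt_besselJ_zero (c * z 0)).comp (z 0) ((hasDerivAt_id (z 0)).const_mul c)
    rw [hw', (hd.hasGradientAt_comp_apply (0 : Fin 2)).gradient]
    simp [norm_smul, mul_pow, mul_comm]
  subst hw'
  refine ⟨?_, ?_, ?_⟩
  · rw [hreduce _ (continuous_besselJ 0), integral_mul_besselJ_zero, hJ1, mul_zero, mul_zero]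
  · rw [hreduce (fun t => besselJ 0 t ^ 2) (by fun_prop)]
    have htan : 0 < tan (α / 2) := tan_pos_of_pos_of_lt_pi_div_two (by linarith) (by linarith)
    exact mul_pos (by positivity) (integral_mul_sq_besselJ_zero_pos hj0)
  · simp_rw [hgrad]
    rw [hreduce (fun t => c ^ 2 * besselJ 1 t ^ 2) (by fun_prop),
      hreduce (fun t => besselJ 0 t ^ 2) (by fun_prop)]
    simp only [mul_left_comm _ (c ^ 2), intervalIntegral.integral_const_mul,
      integral_mul_sq_besselJ_one_of_besselJ_one_eq_zero hJ1]
end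
end

section
/- Fix l > 0 and α, β ∈ (0, π), and let τ : ℝ² → ℝ² be the diagonal linear map τ(x, y) = (x·cos(β/2)/cos(α/2), y·sin(β/2)/sin(α/2)), which maps T(α) onto T(β). Let w : ℝ² → ℝ be C¹ on a neighborhood of T(β) with ∫_{T(β)} w² dA > 0 and ∫_{T(β)} ‖∇w‖² dA > 0, let G ∈ ℝ, and let μα, μβ ∈ ℝ satisfy μβ = (∫_{T(β)} ‖∇w‖² dA)/(∫_{T(β)} w² dA) and μα ≤ (∫_{T(α)} ‖∇(w∘τ)‖² dA)/(∫_{T(α)} (w∘τ)² dA). Set κ = (∫_{T(β)} (∂w/∂y)² dA)/(∫_{T(β)} ((∂w/∂x)² + (∂w/∂y)²) dA). If either (i) α < β and κ < sin²(α/2) + (sin²(α/2)·cos²(α/2)/(sin²(β/2) − sin²(α/2)))·G, or (ii) α > β and κ > sin²(α/2) + (sin²(α/2)·cos²(α/2)/(sin²(β/2) − sin²(α/2)))·G, then μα < (1 + G)·μβ. -/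
open MeasureTheory Real

noncomputable section

/-!
The diagonal map `τ = diag(c, s)`, with `c = cos(β/2)/cos(α/2)` and `s = sin(β/2)/sin(α/2)`,
sends `T(α)` onto `T(β)`, so transplanting `w` to `w ∘ τ` and changing variables gives, after the
Jacobian cancels, a Rayleigh quotient on `T(α)` equal to `(c² A + s² B)/W`, where `A`, `B` are the
integrals of `w_x²`, `w_y²` over `T(β)` and `W` that of `w²`. Since `B = κ (A + B)`, this is
`(c² (1 - κ) + s² κ) μβ`. With `a = sin²(α/2)`, `b = sin²(β/2)` one has `c² = (1 - b)/(1 - a)`,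
`s² = b/a`, and `c² (1 - κ) + s² κ < 1 + G` is equivalent to `(b - a)(κ - a) < a (1 - a) G`,
which is each of the two hypotheses on `κ` once multiplied by `b - a`.
-/

def diagCLM (c s : ℝ) : E2 →L[ℝ] E2 :=
  LinearMap.toContinuousLinearMap
    { toFun := fun z => pt (c * z 0) (s * z 1)
      map_add' := fun x y => by
        ext i; fin_cases i <;> simp [pt] <;> ring
      map_smul' := fun r x => by
        ext i; fin_cases i <;> simp [pt] <;> ring }

lemma diagCLM_apply (c s : ℝ) (z : E2) : diagCLM c s z = pt (c * z 0) (s * z 1) := rfl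

lemma diagCLM_pt (c s a b : ℝ) : diagCLM c s (pt a b) = pt (c * a) (s * b) := by
  simp [diagCLM_apply, pt]

lemma diagCLM_injective {c s : ℝ} (hc : c ≠ 0) (hs : s ≠ 0) :
    Function.Injective (diagCLM c s) := by
  intro x y h
  have h0 := congrArg (fun v : E2 => v 0) h
  have h1 := congrArg (fun v : E2 => v 1) h
  simp only [diagCLM_apply, pt, PiLp.toLp_apply, Matrix.cons_val_zero, Matrix.cons_val_one,
    mul_right_inj' hc, mul_right_inj' hs] at h0 h1
  ext i; fin_cases i
  exacts [h0, h1]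

lemma setIntegral_image_diagCLM {c s : ℝ} (hc : c ≠ 0) (hs : s ≠ 0) {S : Set E2}
    (hS : MeasurableSet S) (f : E2 → ℝ) :
    ∫ z in diagCLM c s '' S, f z = |(diagCLM c s).det| * ∫ z in S, f (diagCLM c s z) := by
  rw [integral_image_eq_integral_abs_det_fderiv_smul volume hS
    (fun x _ => (diagCLM c s).hasFDerivAt.hasFDerivWithinAt)
    (diagCLM_injective hc hs).injOn f]
  simp only [smul_eq_mul, integral_const_mul]

lemma norm_gradient_sq (f : E2 → ℝ) (z : E2) :
    ‖gradient f z‖ ^ 2 = fderiv ℝ f z (pt 1 0) ^ 2 + fderiv ℝ f z (pt 0 1) ^ 2 := by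
  have hdual (v : E2) : fderiv ℝ f z v = inner ℝ (gradient f z) v :=
    InnerProductSpace.toDual_symm_apply.symm
  rw [← real_inner_self_eq_norm_sq, hdual (pt 1 0), hdual (pt 0 1)]
  simp only [PiLp.inner_apply, RCLike.inner_apply, Fin.sum_univ_two, pt, conj_trivial]
  simp
  ring

lemma norm_gradient_comp_diagCLM_sq {c s : ℝ} {w : E2 → ℝ} {z : E2}
    (hw : DifferentiableAt ℝ w (diagCLM c s z)) :
    ‖gradient (w ∘ diagCLM c s) z‖ ^ 2 =
      c ^ 2 * fderiv ℝ w (diagCLM c s z) (pt 1 0) ^ 2 +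
        s ^ 2 * fderiv ℝ w (diagCLM c s z) (pt 0 1) ^ 2 := by
  rw [norm_gradient_sq, fderiv_comp z hw (diagCLM c s).differentiableAt,
    (diagCLM c s).fderiv]
  have hx : pt (c * 1) (s * 0) = c • pt 1 0 := by ext i; fin_cases i <;> simp [pt]
  have hy : pt (c * 0) (s * 1) = s • pt 0 1 := by ext i; fin_cases i <;> simp [pt]
  simp only [ContinuousLinearMap.coe_comp, Function.comp_apply, diagCLM_pt, hx, hy,
    map_smul, smul_eq_mul]
  ring

lemma integrableOn_fderiv_apply_sq {K U : Set E2} (hK : IsCompact K) (hU : IsOpen U)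
    (hKU : K ⊆ U) {w : E2 → ℝ} (hw : ContDiffOn ℝ 1 w U) (v : E2) :
    IntegrableOn (fun z => fderiv ℝ w z v ^ 2) K :=
  ((((hw.continuousOn_fderiv_of_isOpen hU le_rfl).clm_apply continuousOn_const).mono hKU).pow
    2).integrableOn_compact hK

theorem rayleigh_comp_diagCLM {c s : ℝ} (hc : c ≠ 0) (hs : s ≠ 0) {S U : Set E2}
    (hS : IsCompact S) (hU : IsOpen U) (hSU : diagCLM c s '' S ⊆ U) {w : E2 → ℝ}
    (hw : ContDiffOn ℝ 1 w U) (hw2 : 0 < ∫ z in diagCLM c s '' S, w z ^ 2) :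
    (∫ z in S, ‖gradient (w ∘ diagCLM c s) z‖ ^ 2) / (∫ z in S, w (diagCLM c s z) ^ 2) =
      (c ^ 2 * (∫ z in diagCLM c s '' S, fderiv ℝ w z (pt 1 0) ^ 2) +
        s ^ 2 * ∫ z in diagCLM c s '' S, fderiv ℝ w z (pt 0 1) ^ 2) /
        ∫ z in diagCLM c s '' S, w z ^ 2 := by
  set L := diagCLM c s
  have hLS : IsCompact (L '' S) := hS.image L.continuous
  have hgrad : ∫ z in S, ‖gradient (w ∘ L) z‖ ^ 2 =
      ∫ z in S, (c ^ 2 * fderiv ℝ w (L z) (pt 1 0) ^ 2 + s ^ 2 * fderiv ℝ w (L z) (pt 0 1) ^ 2) :=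
    setIntegral_congr_fun hS.measurableSet fun z hz => norm_gradient_comp_diagCLM_sq <|
      (hw.differentiableOn one_ne_zero).differentiableAt (hU.mem_nhds (hSU ⟨z, hz, rfl⟩))
  have hcov := setIntegral_image_diagCLM hc hs hS.measurableSet
  have hnum := hcov fun z => c ^ 2 * fderiv ℝ w z (pt 1 0) ^ 2 + s ^ 2 * fderiv ℝ w z (pt 0 1) ^ 2
  rw [integral_add ((integrableOn_fderiv_apply_sq hLS hU hSU hw _).const_mul _)
    ((integrableOn_fderiv_apply_sq hLS hU hSU hw _).const_mul _), integral_const_mul,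
    integral_const_mul] at hnum
  have hden := hcov fun z => w z ^ 2
  have hdet : |L.det| ≠ 0 := by
    rintro h
    rw [hden, h, zero_mul] at hw2
    exact hw2.false
  rw [hnum, hden, hgrad, mul_div_mul_left _ _ hdet]

lemma isCompact_Tri (α l : ℝ) : IsCompact (Tri α l) :=
  (Set.toFinite _).isCompact_convexHull (𝕜 := ℝ)

lemma image_diagCLM_Tri {α β : ℝ} (hcα : cos (α / 2) ≠ 0) (hsα : sin (α / 2) ≠ 0) (l : ℝ) :
    diagCLM (cos (β / 2) / cos (α / 2)) (sin (β / 2) / sin (α / 2)) '' Tri α l = Tri β l := by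
  rw [Tri, ← ContinuousLinearMap.coe_coe, LinearMap.image_convexHull, ContinuousLinearMap.coe_coe]
  have hc : cos (β / 2) / cos (α / 2) * (l * cos (α / 2)) = l * cos (β / 2) := by field_simp
  have hs : sin (β / 2) / sin (α / 2) * (l * sin (α / 2)) = l * sin (β / 2) := by field_simp
  simp only [Set.image_insert_eq, Set.image_singleton, diagCLM_pt, mul_zero, mul_neg, hc, hs, Tri]

lemma cos_half_pos {α : ℝ} (hα : α ∈ Set.Ioo 0 π) : 0 < cos (α / 2) :=
  cos_pos_of_mem_Ioo ⟨by linarith [hα.1, pi_pos], by linarith [hα.2]⟩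

lemma sin_half_pos {α : ℝ} (hα : α ∈ Set.Ioo 0 π) : 0 < sin (α / 2) :=
  sin_pos_of_pos_of_lt_pi (by linarith [hα.1]) (by linarith [hα.2, pi_pos])

lemma sin_sq_half_lt_sin_sq_half {α β : ℝ} (hα : 0 < α) (hαβ : α < β) (hβ : β < π) :
    sin (α / 2) ^ 2 < sin (β / 2) ^ 2 :=
  pow_lt_pow_left₀
    (sin_lt_sin_of_lt_of_le_pi_div_two (by linarith [pi_pos]) (by linarith) (by linarith))
    (sin_half_pos ⟨hα, hαβ.trans hβ⟩).le two_ne_zero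

lemma one_sub_div_mul_add_div_mul_lt {a b κ G : ℝ} (ha : 0 < a) (ha1 : a < 1)
    (h : (a < b ∧ κ < a + a * (1 - a) / (b - a) * G) ∨
      (b < a ∧ a + a * (1 - a) / (b - a) * G < κ)) :
    (1 - b) / (1 - a) * (1 - κ) + b / a * κ < 1 + G := by
  have key : (b - a) * (κ - a) < a * (1 - a) * G := by
    have hcancel (hba : b - a ≠ 0) :
        (b - a) * (a + a * (1 - a) / (b - a) * G) = (b - a) * a + a * (1 - a) * G := by
      field_simp
    rcases h with ⟨hab, hκ⟩ | ⟨hab, hκ⟩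
    · have := mul_lt_mul_of_pos_left hκ (sub_pos.mpr hab)
      rw [hcancel (sub_pos.mpr hab).ne'] at this
      linarith
    · have := mul_lt_mul_of_neg_left hκ (sub_neg.mpr hab)
      rw [hcancel (sub_neg.mpr hab).ne] at this
      linarith
  have hden : 0 < a * (1 - a) := mul_pos ha (sub_pos.mpr ha1)
  have hexp : (1 - b) / (1 - a) * (1 - κ) + b / a * κ - (1 + G) =
      ((b - a) * (κ - a) - a * (1 - a) * G) / (a * (1 - a)) := by
    field_simp [(sub_pos.mpr ha1).ne']
    ring
  linarith [div_neg_of_neg_of_pos (sub_neg.mpr key) hden]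

lemma sq_cos_div_mul_add_sq_sin_div_mul_lt {α β κ G : ℝ} (hα : α ∈ Set.Ioo 0 π)
    (hβ : β ∈ Set.Ioo 0 π)
    (hcond : (α < β ∧ κ < sin (α / 2) ^ 2 +
        (sin (α / 2) ^ 2 * cos (α / 2) ^ 2 / (sin (β / 2) ^ 2 - sin (α / 2) ^ 2)) * G) ∨
      (β < α ∧ sin (α / 2) ^ 2 +
        (sin (α / 2) ^ 2 * cos (α / 2) ^ 2 / (sin (β / 2) ^ 2 - sin (α / 2) ^ 2)) * G < κ)) :
    (cos (β / 2) / cos (α / 2)) ^ 2 * (1 - κ) + (sin (β / 2) / sin (α / 2)) ^ 2 * κ < 1 + G := by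
  rw [cos_sq' (α / 2)] at hcond
  rw [div_pow, div_pow, cos_sq', cos_sq']
  have hsα := sin_half_pos hα
  have ha1 : sin (α / 2) ^ 2 < 1 := by nlinarith [sin_sq_add_cos_sq (α / 2), cos_half_pos hα]
  exact one_sub_div_mul_add_div_mul_lt (by positivity) ha1
    (hcond.imp (fun h => ⟨sin_sq_half_lt_sin_sq_half hα.1 h.1 hβ.2, h.2⟩)
      fun h => ⟨sin_sq_half_lt_sin_sq_half hβ.1 h.1 hα.2, h.2⟩)

theorem transplantation_lemma_general
    (l α β : ℝ) (hα : α ∈ Set.Ioo 0 π) (hβ : β ∈ Set.Ioo 0 π)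
    (τ : E2 → E2)
    (hτ : τ = fun p => pt (p 0 * Real.cos (β/2) / Real.cos (α/2))
      (p 1 * Real.sin (β/2) / Real.sin (α/2)))
    (w : E2 → ℝ) (hw : ∃ U : Set E2, IsOpen U ∧ Tri β l ⊆ U ∧ ContDiffOn ℝ 1 w U)
    (hw2 : 0 < ∫ z in Tri β l, (w z)^2)
    (hwg : 0 < ∫ z in Tri β l, ‖gradient w z‖^2)
    (G μα μβ : ℝ)
    (hμβ : μβ = (∫ z in Tri β l, ‖gradient w z‖^2) / (∫ z in Tri β l, (w z)^2))
    (hμα : μα ≤ (∫ z in Tri α l, ‖gradient (w ∘ τ) z‖^2) /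
      (∫ z in Tri α l, (w (τ z))^2))
    (κ : ℝ)
    (hκ : κ = (∫ z in Tri β l, (fderiv ℝ w z (pt 0 1))^2) /
      (∫ z in Tri β l, ((fderiv ℝ w z (pt 1 0))^2 + (fderiv ℝ w z (pt 0 1))^2)))
    (hcond : (α < β ∧ κ < Real.sin (α/2)^2 +
        (Real.sin (α/2)^2 * Real.cos (α/2)^2 /
          (Real.sin (β/2)^2 - Real.sin (α/2)^2)) * G) ∨
      (β < α ∧ Real.sin (α/2)^2 +
        (Real.sin (α/2)^2 * Real.cos (α/2)^2 /
          (Real.sin (β/2)^2 - Real.sin (α/2)^2)) * G < κ)) :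
    μα < (1 + G) * μβ := by
  obtain ⟨U, hU, hTU, hwC⟩ := hw
  set c := cos (β / 2) / cos (α / 2)
  set s := sin (β / 2) / sin (α / 2)
  have hτL : τ = diagCLM c s := by
    subst hτ; funext p; rw [diagCLM_apply]; congr 1 <;> ring
  have himg : diagCLM c s '' Tri α l = Tri β l :=
    image_diagCLM_Tri (cos_half_pos hα).ne' (sin_half_pos hα).ne' l
  set A := ∫ z in Tri β l, fderiv ℝ w z (pt 1 0) ^ 2
  set B := ∫ z in Tri β l, fderiv ℝ w z (pt 0 1) ^ 2
  set W := ∫ z in Tri β l, w z ^ 2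
  have hsum : ∫ z in Tri β l, (fderiv ℝ w z (pt 1 0) ^ 2 + fderiv ℝ w z (pt 0 1) ^ 2) = A + B :=
    integral_add (integrableOn_fderiv_apply_sq (isCompact_Tri β l) hU hTU hwC _)
      (integrableOn_fderiv_apply_sq (isCompact_Tri β l) hU hTU hwC _)
  have hgrad : ∫ z in Tri β l, ‖gradient w z‖ ^ 2 = A + B := by
    simp_rw [norm_gradient_sq]; exact hsum
  have hAB : 0 < A + B := hgrad ▸ hwg
  have hκB : B = κ * (A + B) := by rw [hκ, hsum, div_mul_cancel₀ _ hAB.ne']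
  have hquot : μα ≤ (c ^ 2 * A + s ^ 2 * B) / W := by
    have := rayleigh_comp_diagCLM (div_pos (cos_half_pos hβ) (cos_half_pos hα)).ne'
      (div_pos (sin_half_pos hβ) (sin_half_pos hα)).ne' (isCompact_Tri α l) hU (himg ▸ hTU) hwC
      (himg ▸ hw2)
    rw [himg] at this
    rwa [hτL, this] at hμα
  calc μα ≤ (c ^ 2 * A + s ^ 2 * B) / W := hquot
    _ = (c ^ 2 * (1 - κ) + s ^ 2 * κ) * ((A + B) / W) := by
      rw [mul_div_assoc']; congr 1; linear_combination (s ^ 2 - c ^ 2) * hκB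
    _ < (1 + G) * ((A + B) / W) :=
      mul_lt_mul_of_pos_right (sq_cos_div_mul_add_sq_sin_div_mul_lt hα hβ hcond)
        (div_pos hAB hw2)
    _ = (1 + G) * μβ := by rw [hμβ, hgrad]

/-- Transplantation lemma for isosceles triangles (Lemma 4 of
Laugesen–Siudeja): comparing an eigenvalue of `T(β)` with a Rayleigh
quotient bound on `T(α)` via the diagonal linear map `τ`. -/
theorem transplantation_lemma
    (l α β : ℝ) (hl : 0 < l) (hα : α ∈ Set.Ioo 0 π) (hβ : β ∈ Set.Ioo 0 π)
    (τ : E2 → E2)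
    (hτ : τ = fun p => pt (p 0 * Real.cos (β/2) / Real.cos (α/2))
      (p 1 * Real.sin (β/2) / Real.sin (α/2)))
    (w : E2 → ℝ) (hw : ∃ U : Set E2, IsOpen U ∧ Tri β l ⊆ U ∧ ContDiffOn ℝ 1 w U)
    (hw2 : 0 < ∫ z in Tri β l, (w z)^2)
    (hwg : 0 < ∫ z in Tri β l, ‖gradient w z‖^2)
    (G μα μβ : ℝ)
    (hμβ : μβ = (∫ z in Tri β l, ‖gradient w z‖^2) / (∫ z in Tri β l, (w z)^2))
    (hμα : μα ≤ (∫ z in Tri α l, ‖gradient (w ∘ τ) z‖^2) /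
      (∫ z in Tri α l, (w (τ z))^2))
    (κ : ℝ)
    (hκ : κ = (∫ z in Tri β l, (fderiv ℝ w z (pt 0 1))^2) /
      (∫ z in Tri β l, ((fderiv ℝ w z (pt 1 0))^2 + (fderiv ℝ w z (pt 0 1))^2)))
    (hcond : (α < β ∧ κ < Real.sin (α/2)^2 +
        (Real.sin (α/2)^2 * Real.cos (α/2)^2 /
          (Real.sin (β/2)^2 - Real.sin (α/2)^2)) * G) ∨
      (β < α ∧ Real.sin (α/2)^2 +
        (Real.sin (α/2)^2 * Real.cos (α/2)^2 /
          (Real.sin (β/2)^2 - Real.sin (α/2)^2)) * G < κ)) :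
    μα < (1 + G) * μβ :=
  transplantation_lemma_general l α β hα hβ τ hτ w hw hw2 hwg G μα μβ hμβ hμα κ hκ hcond
end
end

section
/- Let Ω ⊆ ℝ² be a bounded open set, let t > 1, and let Ω_t = {(x, t·y) : (x, y) ∈ Ω} be the stretch of Ω by factor t in the y-direction. Given u : ℝ² → ℝ that is C¹ on a neighborhood of the closure of Ω, define v(x, y) = u(x, y/t). Then: (a) ∫_{Ω_t} v dA = t·∫_Ω u dA; (b) ∫_{Ω_t} v² dA = t·∫_Ω u² dA; and (c) ∫_{Ω_t} ‖∇v‖² dA ≤ t·∫_Ω ‖∇u‖² dA. In particular, if ∫_Ω u dA = 0 and ∫_Ω u² dA > 0, then v has mean value zero over Ω_t and its Rayleigh quotient satisfies (∫_{Ω_t} ‖∇v‖² dA)/(∫_{Ω_t} v² dA) ≤ (∫_Ω ‖∇u‖² dA)/(∫_Ω u² dA). -/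
open MeasureTheory Real

noncomputable section

/-!
Transplanting `u` along the stretch `L = diag(1, t)` is a linear change of variables: integrals
of `u` and `u²` over `Ω` become integrals of `v = u ∘ L⁻¹` over `L Ω` at the price of the Jacobian
`det L = t`. By the chain rule `Dv (L x) = Du x ∘ L⁻¹`, and `‖L⁻¹‖ ≤ 1` because `L⁻¹` only
shrinks the second coordinate, so the Dirichlet energy grows by at most the same factor `t`.
The factor `t` then cancels in the Rayleigh quotient.
-/

section ChangeOfVariables

variable {E F : Type*} [NormedAddCommGroup E] [NormedSpace ℝ E] [FiniteDimensional ℝ E]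
  [MeasurableSpace E] [BorelSpace E] (μ : Measure E) [μ.IsAddHaarMeasure]
  [NormedAddCommGroup F] [NormedSpace ℝ F]

theorem setIntegral_image_continuousLinearEquiv (L : E ≃L[ℝ] E) {s : Set E}
    (hs : MeasurableSet s) (g : E → F) :
    ∫ z in L '' s, g z ∂μ = |(L : E →L[ℝ] E).det| • ∫ x in s, g (L x) ∂μ := by
  have h := integral_image_eq_integral_abs_det_fderiv_smul μ hs
    (fun x _ => (L : E →L[ℝ] E).hasFDerivAt.hasFDerivWithinAt) L.injective.injOn g
  rwa [integral_smul] at h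

end ChangeOfVariables

section Gradient

variable {E F : Type*} [NormedAddCommGroup E] [InnerProductSpace ℝ E] [CompleteSpace E]
  [NormedAddCommGroup F] [InnerProductSpace ℝ F] [CompleteSpace F]

theorem norm_gradient_eq_norm_fderiv (u : E → ℝ) (x : E) :
    ‖gradient u x‖ = ‖fderiv ℝ u x‖ :=
  (InnerProductSpace.toDual ℝ E).symm.norm_map _

theorem norm_gradient_comp_le {u : F → ℝ} (L : E →L[ℝ] F) {x : E}
    (hu : DifferentiableAt ℝ u (L x)) :
    ‖gradient (u ∘ L) x‖ ≤ ‖gradient u (L x)‖ * ‖L‖ := by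
  simp only [norm_gradient_eq_norm_fderiv, fderiv_comp x hu L.differentiableAt, L.fderiv]
  exact (fderiv ℝ u (L x)).opNorm_comp_le L

theorem setIntegral_norm_gradient_comp_symm_sq_le [FiniteDimensional ℝ E] [MeasurableSpace E]
    [BorelSpace E] (μ : Measure E) [μ.IsAddHaarMeasure] (L : E ≃L[ℝ] E)
    (hL : ‖(L.symm : E →L[ℝ] E)‖ ≤ 1) {s : Set E} (hs : MeasurableSet s) {u : E → ℝ}
    (hu : ∀ x ∈ s, DifferentiableAt ℝ u x)
    (hint : IntegrableOn (fun x => ‖gradient u x‖ ^ 2) s μ) :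
    ∫ z in L '' s, ‖gradient (u ∘ L.symm) z‖ ^ 2 ∂μ
      ≤ |(L : E →L[ℝ] E).det| * ∫ x in s, ‖gradient u x‖ ^ 2 ∂μ := by
  rw [setIntegral_image_continuousLinearEquiv μ L hs, smul_eq_mul]
  refine mul_le_mul_of_nonneg_left ?_ (abs_nonneg _)
  refine integral_mono_of_nonneg (.of_forall fun _ => sq_nonneg _) hint ?_
  refine (ae_restrict_iff' hs).2 (.of_forall fun x hx => ?_)
  have hux : DifferentiableAt ℝ u ((L.symm : E →L[ℝ] E) (L x)) := by simpa using hu x hx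
  refine pow_le_pow_left₀ (norm_nonneg _) ?_ 2
  calc ‖gradient (u ∘ L.symm) (L x)‖
      ≤ ‖gradient u (L.symm (L x))‖ * ‖(L.symm : E →L[ℝ] E)‖ := norm_gradient_comp_le _ hux
    _ ≤ ‖gradient u x‖ := by
      simpa using mul_le_of_le_one_right (norm_nonneg _) hL

end Gradient

def stretch (c : ℝ) : E2 →L[ℝ] E2 :=
  LinearMap.toContinuousLinearMap
    { toFun := fun p => pt (p 0) (c * p 1)
      map_add' := fun p q => by ext i; fin_cases i <;> simp [pt, mul_add]
      map_smul' := fun a p => by ext i; fin_cases i <;> simp [pt, mul_left_comm] }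

theorem stretch_apply (c : ℝ) (p : E2) : stretch c p = pt (p 0) (c * p 1) := rfl

theorem stretch_stretch (a b : ℝ) (p : E2) : stretch a (stretch b p) = stretch (a * b) p := by
  simp [stretch_apply, pt, mul_assoc]

theorem stretch_one (p : E2) : stretch 1 p = p := by
  ext i; fin_cases i <;> simp [stretch_apply, pt]

def stretchEquiv (t : ℝ) (ht : t ≠ 0) : E2 ≃L[ℝ] E2 :=
  .equivOfInverse (stretch t) (stretch t⁻¹)
    (fun p => by rw [stretch_stretch, inv_mul_cancel₀ ht, stretch_one])
    (fun p => by rw [stretch_stretch, mul_inv_cancel₀ ht, stretch_one])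

theorem det_stretch (c : ℝ) : (stretch c).det = c := by
  rw [ContinuousLinearMap.det,
    ← LinearMap.det_toMatrix (EuclideanSpace.basisFun (Fin 2) ℝ).toBasis, Matrix.det_fin_two]
  simp [LinearMap.toMatrix_apply, stretch_apply, pt]

theorem norm_stretch_le {c : ℝ} (hc : |c| ≤ 1) : ‖stretch c‖ ≤ 1 := by
  refine ContinuousLinearMap.opNorm_le_bound _ zero_le_one fun p => ?_
  rw [one_mul, EuclideanSpace.norm_eq, EuclideanSpace.norm_eq]
  refine Real.sqrt_le_sqrt ?_
  simp only [Fin.sum_univ_two, stretch_apply, pt, norm_eq_abs, sq_abs, Matrix.cons_val_zero,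
    Matrix.cons_val_one]
  have : c ^ 2 ≤ 1 := by rwa [sq_le_one_iff_abs_le_one]
  nlinarith [sq_nonneg (p 1)]

/-- Stretching a domain by a factor `t > 1` in the y-direction does not
increase the Rayleigh quotient of a transplanted trial function. -/
theorem stretching_reduces_rayleigh
    (Ω : Set E2) (hΩo : IsOpen Ω) (hΩb : Bornology.IsBounded Ω)
    (t : ℝ) (ht : 1 < t)
    (Ωt : Set E2) (hΩt : Ωt = (fun p : E2 => pt (p 0) (t * p 1)) '' Ω)
    (u : E2 → ℝ)
    (hu : ∃ U : Set E2, IsOpen U ∧ closure Ω ⊆ U ∧ ContDiffOn ℝ 1 u U)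
    (v : E2 → ℝ) (hv : v = fun p : E2 => u (pt (p 0) (p 1 / t))) :
    (∫ z in Ωt, v z = t * ∫ z in Ω, u z) ∧
    (∫ z in Ωt, (v z)^2 = t * ∫ z in Ω, (u z)^2) ∧
    (∫ z in Ωt, ‖gradient v z‖^2 ≤ t * ∫ z in Ω, ‖gradient u z‖^2) ∧
    ((∫ z in Ω, u z = 0) → (0 < ∫ z in Ω, (u z)^2) →
      (∫ z in Ωt, v z = 0) ∧
      (∫ z in Ωt, ‖gradient v z‖^2) / (∫ z in Ωt, (v z)^2) ≤
        (∫ z in Ω, ‖gradient u z‖^2) / (∫ z in Ω, (u z)^2)) := by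
  obtain ⟨U, hUo, hΩU, huC1⟩ := hu
  have ht0 : 0 < t := one_pos.trans ht
  set L := stretchEquiv t ht0.ne'
  have hΩtL : Ωt = L '' Ω := hΩt
  have hvL : v = u ∘ L.symm := by
    rw [hv]; funext p; simp [L, stretchEquiv, stretch_apply, div_eq_inv_mul]
  have hdet : |(L : E2 →L[ℝ] E2).det| = t := by
    rw [← abs_of_pos ht0, ← det_stretch t]; rfl
  have htransplant (g : ℝ → ℝ) : ∫ z in Ωt, g (v z) = t * ∫ z in Ω, g (u z) := by
    rw [hΩtL, setIntegral_image_continuousLinearEquiv volume L hΩo.measurableSet, hdet, hvL]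
    simp
  have hc : ∫ z in Ωt, ‖gradient v z‖^2 ≤ t * ∫ z in Ω, ‖gradient u z‖^2 := by
    have hgrad : ContinuousOn (fun x => ‖gradient u x‖ ^ 2) U := by
      simp_rw [norm_gradient_eq_norm_fderiv]
      exact ((huC1.continuousOn_fderiv_of_isOpen hUo le_rfl).norm).pow 2
    rw [hΩtL, hvL, ← hdet]
    refine setIntegral_norm_gradient_comp_symm_sq_le volume L ?_ hΩo.measurableSet
      (fun x hx => (huC1.differentiableOn one_ne_zero).differentiableAt
        (hUo.mem_nhds (hΩU (subset_closure hx))))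
      (((hgrad.mono hΩU).integrableOn_compact hΩb.isCompact_closure).mono_set subset_closure)
    exact norm_stretch_le (by rw [abs_inv, abs_of_pos ht0]; exact inv_le_one_of_one_le₀ ht.le)
  have ha : ∫ z in Ωt, v z = t * ∫ z in Ω, u z := htransplant id
  have hb := htransplant (· ^ 2)
  refine ⟨ha, hb, hc, fun hmean hpos => ⟨by rw [ha, hmean, mul_zero], ?_⟩⟩
  calc (∫ z in Ωt, ‖gradient v z‖^2) / (∫ z in Ωt, (v z)^2)
      ≤ (t * ∫ z in Ω, ‖gradient u z‖^2) / (t * ∫ z in Ω, (u z)^2) := by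
        rw [hb]; exact div_le_div_of_nonneg_right hc (by positivity)
    _ = (∫ z in Ω, ‖gradient u z‖^2) / (∫ z in Ω, (u z)^2) := mul_div_mul_left _ _ ht0.ne'
end
end
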